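/- Let A be an m×n matrix all of whose columns are regular (equivalently, all entries of A are real), let B ∈ (ℝ ∪ {−∞})^{l×n} be a column-regular matrix, and let p ∈ ℝ^m and q ∈ ℝ^l be regular vectors. Denote by a_i and b_i the i-th columns of A and B. Then the maximum of q⁻ B x ⊗ (A x)⁻ p over all regular vectors x ∈ ℝⁿ equals Δ = q⁻ B A⁻ p, and a regular vector x is a maximizer if and only if there exist α ∈ ℝ and indices k attaining max_{1≤i≤n} q⁻ b_i ⊗ a_i⁻ p and s attaining max_{1≤i≤m} (p_i − a_{ik}) such that x_k = α ⊗ a_k⁻ p and x_j ≤ α ⊗ (p_s − a_{sj}) for all j ≠ k. -/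

import Mathlib

/-!
Write `cᵢ = q⁻ bᵢ` and `dᵢ = aᵢ⁻ p`. Associativity of max-plus products gives
`q⁻ B x = ⊕ᵢ cᵢ xᵢ` and `Δ = ⊕ᵢ cᵢ dᵢ`, and since `(A x)ₜ ≥ aₜᵢ xᵢ` for every row `t`,
antitonicity of conjugation gives `(A x)⁻ p ≤ xᵢ⁻ dᵢ` for every `i`; hence the objective is at
most `⊕ᵢ cᵢ xᵢ xᵢ⁻ dᵢ = Δ`. If `k` attains `⊕ᵢ cᵢ xᵢ` and `t` attains `(A x)⁻ p`, equality
squeezes `cₖ xₖ (A x)ₜ⁻ pₜ ≤ cₖ aₜₖ⁻ pₜ ≤ cₖ dₖ ≤ Δ` into equalities: `k` maximizes `cᵢ dᵢ`,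
`s = t` attains `dₖ`, and `(A x)ₜ = aₜₖ xₖ`, which is the bound on the `xⱼ` with `α = xₖ dₖ⁻`.
Conversely these conditions make `(A x)ₛ ≤ α pₛ`, so the objective is at least `cₖ xₖ α⁻ = Δ`.
-/

open Finset

noncomputable section

namespace MaxPlus

/-- Max-plus multiplicative inverse: `-a` for real `a`, `⊥` for `⊥`. -/
def tinv (a : WithBot ℝ) : WithBot ℝ := WithBot.map (fun r => -r) a

/-- Max-plus rational power `a^(1/k) = a / k`. -/
def trt (a : WithBot ℝ) (k : ℕ) : WithBot ℝ := WithBot.map (fun r => r / (k : ℝ)) a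

/-- A vector is regular if it has no `⊥` (= -∞) entries. -/
def Reg {n : ℕ} (x : Fin n → WithBot ℝ) : Prop := ∀ i, x i ≠ ⊥

/-- `cdot q x = q⁻ x`, the max-plus product of the conjugate row vector `q⁻` with `x`. -/
def cdot {n : ℕ} (q x : Fin n → WithBot ℝ) : WithBot ℝ :=
  Finset.univ.sup fun i => tinv (q i) + x i

/-- Max-plus matrix-vector product. -/
def mulVec {m n : ℕ} (A : Matrix (Fin m) (Fin n) (WithBot ℝ)) (x : Fin n → WithBot ℝ) :
    Fin m → WithBot ℝ := fun i => Finset.univ.sup fun j => A i j + x j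

/-- Max-plus matrix product. -/
def tmul {l m n : ℕ} (A : Matrix (Fin l) (Fin m) (WithBot ℝ))
    (B : Matrix (Fin m) (Fin n) (WithBot ℝ)) : Matrix (Fin l) (Fin n) (WithBot ℝ) :=
  fun i j => Finset.univ.sup fun k => A i k + B k j

/-- Multiplicative conjugate transpose of a matrix. -/
def conjM {m n : ℕ} (A : Matrix (Fin m) (Fin n) (WithBot ℝ)) :
    Matrix (Fin n) (Fin m) (WithBot ℝ) := fun i j => tinv (A j i)

/-- Max-plus identity matrix. -/
def tId {n : ℕ} : Matrix (Fin n) (Fin n) (WithBot ℝ) := fun i j => if i = j then 0 else ⊥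

/-- Max-plus matrix power. -/
def tpow {n : ℕ} (A : Matrix (Fin n) (Fin n) (WithBot ℝ)) : ℕ → Matrix (Fin n) (Fin n) (WithBot ℝ)
  | 0 => tId
  | k + 1 => tmul A (tpow A k)

/-- Max-plus trace. -/
def ttr {n : ℕ} (A : Matrix (Fin n) (Fin n) (WithBot ℝ)) : WithBot ℝ :=
  Finset.univ.sup fun i => A i i

/-- `Tr(A) = tr A ⊕ tr A² ⊕ ⋯ ⊕ tr Aⁿ`. -/
def TrOp {n : ℕ} (A : Matrix (Fin n) (Fin n) (WithBot ℝ)) : WithBot ℝ :=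
  (Finset.Icc 1 n).sup fun m => ttr (tpow A m)

/-- Kleene star `A* = I ⊕ A ⊕ ⋯ ⊕ A^(n-1)`. -/
def kstar {n : ℕ} (A : Matrix (Fin n) (Fin n) (WithBot ℝ)) : Matrix (Fin n) (Fin n) (WithBot ℝ) :=
  fun i j => (Finset.range n).sup fun k => tpow A k i j

/-- Max-plus spectral radius `λ = ⊕_{m=1}^n (tr A^m)^(1/m)`. -/
def specRad {n : ℕ} (A : Matrix (Fin n) (Fin n) (WithBot ℝ)) : WithBot ℝ :=
  (Finset.Icc 1 n).sup fun m => trt (ttr (tpow A m)) m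

/-- `prodAB A B [i₁, …, i_k] = A B^{i₁} A B^{i₂} ⋯ A B^{i_k}`. -/
def prodAB {n : ℕ} (A B : Matrix (Fin n) (Fin n) (WithBot ℝ)) :
    List ℕ → Matrix (Fin n) (Fin n) (WithBot ℝ)
  | [] => tId
  | i :: t => tmul (tmul A (tpow B i)) (prodAB A B t)

/-- The all-ones (all-`𝟙 = 0`) vector. -/
def onesV (n : ℕ) : Fin n → WithBot ℝ := fun _ => 0

end MaxPlus

open MaxPlus

namespace MaxPlus

open Finset

section WithBot

variable {ι α : Type*} [Add α] [LinearOrder α]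

theorem add_finset_sup [AddLeftMono α] (s : Finset ι) (f : ι → WithBot α) (a : WithBot α) :
    a + s.sup f = s.sup fun i => a + f i :=
  apply_sup_eq_sup_comp_of_linearOrder (a + ·) (fun _ _ h => add_le_add_right h a)
    (WithBot.add_bot a)

theorem finset_sup_add [AddRightMono α] (s : Finset ι) (f : ι → WithBot α) (a : WithBot α) :
    s.sup f + a = s.sup fun i => f i + a :=
  apply_sup_eq_sup_comp_of_linearOrder (· + a) (fun _ _ h => add_le_add_left h a)
    (WithBot.bot_add a)

end WithBot

theorem tinv_coe (r : ℝ) : tinv r = ((-r : ℝ) : WithBot ℝ) := rfl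

theorem tinv_add (a b : WithBot ℝ) : tinv (a + b) = tinv a + tinv b := by
  induction a using WithBot.recBotCoe <;> induction b using WithBot.recBotCoe <;>
    simp [tinv, ← WithBot.coe_add, add_comm]

theorem tinv_tinv (a : WithBot ℝ) : tinv (tinv a) = a := by
  induction a using WithBot.recBotCoe <;> simp [tinv]

theorem tinv_ne_bot {a : WithBot ℝ} (ha : a ≠ ⊥) : tinv a ≠ ⊥ := by
  lift a to ℝ using ha
  exact WithBot.coe_ne_bot

theorem add_tinv_cancel {a : WithBot ℝ} (ha : a ≠ ⊥) : a + tinv a = 0 := by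
  lift a to ℝ using ha
  rw [tinv_coe, ← WithBot.coe_add, add_neg_cancel, WithBot.coe_zero]

theorem tinv_add_cancel {a : WithBot ℝ} (ha : a ≠ ⊥) : tinv a + a = 0 := by
  rw [add_comm, add_tinv_cancel ha]

theorem tinv_le_tinv {a b : WithBot ℝ} (ha : a ≠ ⊥) (h : a ≤ b) : tinv b ≤ tinv a := by
  lift a to ℝ using ha
  lift b to ℝ using ne_bot_of_le_ne_bot WithBot.coe_ne_bot h
  simpa [tinv_coe] using h

theorem le_tinv_add_iff_add_le {a b c : WithBot ℝ} (ha : a ≠ ⊥) :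
    b ≤ tinv a + c ↔ a + b ≤ c := by
  lift a to ℝ using ha
  induction b using WithBot.recBotCoe <;> induction c using WithBot.recBotCoe <;>
    simp [tinv_coe, ← WithBot.coe_add, le_neg_add_iff_add_le]

section Products

variable {l m n : ℕ}

theorem sup_add_sup_assoc (a : Fin l → WithBot ℝ) (B : Matrix (Fin l) (Fin n) (WithBot ℝ))
    (x : Fin n → WithBot ℝ) :
    (univ.sup fun r => a r + univ.sup fun j => B r j + x j) =
      univ.sup fun j => (univ.sup fun r => a r + B r j) + x j := by
  simp only [add_finset_sup, finset_sup_add, add_assoc]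
  exact Finset.sup_comm _ _ _

theorem mulVec_tmul (B : Matrix (Fin l) (Fin m) (WithBot ℝ))
    (C : Matrix (Fin m) (Fin n) (WithBot ℝ)) (x : Fin n → WithBot ℝ) :
    mulVec (tmul B C) x = mulVec B (mulVec C x) :=
  funext fun i => (sup_add_sup_assoc (B i) C x).symm

theorem cdot_mulVec (q : Fin l → WithBot ℝ) (B : Matrix (Fin l) (Fin n) (WithBot ℝ))
    (x : Fin n → WithBot ℝ) :
    cdot q (mulVec B x) = univ.sup fun i => cdot q (fun r => B r i) + x i :=
  sup_add_sup_assoc _ B x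

theorem cdot_mulVec_tmul_conjM (q : Fin l → WithBot ℝ) (B : Matrix (Fin l) (Fin n) (WithBot ℝ))
    (A : Matrix (Fin m) (Fin n) (WithBot ℝ)) (p : Fin m → WithBot ℝ) :
    cdot q (mulVec (tmul B (conjM A)) p) =
      univ.sup fun i => cdot q (fun r => B r i) + cdot (fun r => A r i) p := by
  rw [mulVec_tmul, cdot_mulVec]
  rfl

theorem le_cdot_mulVec_tmul_conjM (q : Fin l → WithBot ℝ) (B : Matrix (Fin l) (Fin n) (WithBot ℝ))
    (A : Matrix (Fin m) (Fin n) (WithBot ℝ)) (p : Fin m → WithBot ℝ) (i : Fin n) :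
    cdot q (fun r => B r i) + cdot (fun r => A r i) p ≤ cdot q (mulVec (tmul B (conjM A)) p) := by
  rw [cdot_mulVec_tmul_conjM]
  exact le_sup (f := fun i => cdot q (fun r => B r i) + cdot (fun r => A r i) p) (mem_univ i)

theorem add_le_mulVec (A : Matrix (Fin m) (Fin n) (WithBot ℝ)) (x : Fin n → WithBot ℝ)
    (t : Fin m) (j : Fin n) : A t j + x j ≤ mulVec A x t :=
  le_sup (f := fun j => A t j + x j) (mem_univ j)

end Products

section Cdot

variable {m : ℕ}

theorem le_cdot (q y : Fin m → WithBot ℝ) (r : Fin m) : tinv (q r) + y r ≤ cdot q y :=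
  le_sup (f := fun r => tinv (q r) + y r) (mem_univ r)

theorem cdot_ne_bot {q y : Fin m → WithBot ℝ} {r : Fin m} (hq : q r ≠ ⊥) (hy : y r ≠ ⊥) :
    cdot q y ≠ ⊥ :=
  ne_bot_of_le_ne_bot (WithBot.add_ne_bot.2 ⟨tinv_ne_bot hq, hy⟩) (le_cdot q y r)

theorem cdot_le_cdot {y y' : Fin m → WithBot ℝ} (p : Fin m → WithBot ℝ) (hy : Reg y)
    (h : ∀ t, y t ≤ y' t) : cdot y' p ≤ cdot y p :=
  Finset.sup_le fun t _ => (add_le_add_left (tinv_le_tinv (hy t) (h t)) _).trans (le_cdot y p t)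

theorem cdot_add_const (y p : Fin m → WithBot ℝ) (a : WithBot ℝ) :
    cdot (fun t => y t + a) p = tinv a + cdot y p := by
  simp only [cdot, tinv_add, add_finset_sup]
  congr 1
  funext t
  ac_rfl

end Cdot

def objective {l m n : ℕ} (q : Fin l → WithBot ℝ) (B : Matrix (Fin l) (Fin n) (WithBot ℝ))
    (A : Matrix (Fin m) (Fin n) (WithBot ℝ)) (p : Fin m → WithBot ℝ) (x : Fin n → WithBot ℝ) :
    WithBot ℝ :=
  cdot q (mulVec B x) + cdot (mulVec A x) p

section Objective

variable {l m n : ℕ} {A : Matrix (Fin m) (Fin n) (WithBot ℝ)}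
  {B : Matrix (Fin l) (Fin n) (WithBot ℝ)} {p : Fin m → WithBot ℝ} {q : Fin l → WithBot ℝ}
  {x : Fin n → WithBot ℝ}

theorem cdot_mulVec_le {i : Fin n} (hA : ∀ t, A t i ≠ ⊥) (hxi : x i ≠ ⊥) :
    cdot (mulVec A x) p ≤ tinv (x i) + cdot (fun t => A t i) p :=
  calc cdot (mulVec A x) p ≤ cdot (fun t => A t i + x i) p :=
        cdot_le_cdot p (fun t => WithBot.add_ne_bot.2 ⟨hA t, hxi⟩) (add_le_mulVec A x · i)
    _ = tinv (x i) + cdot (fun t => A t i) p := cdot_add_const _ _ _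

theorem objective_le (hA : ∀ i j, A i j ≠ ⊥) (hx : Reg x) :
    objective q B A p x ≤ cdot q (mulVec (tmul B (conjM A)) p) := by
  rw [objective, cdot_mulVec, finset_sup_add]
  refine Finset.sup_le fun i _ => le_trans ?_ (le_cdot_mulVec_tmul_conjM q B A p i)
  calc cdot q (fun r => B r i) + x i + cdot (mulVec A x) p
      ≤ cdot q (fun r => B r i) + x i + (tinv (x i) + cdot (fun r => A r i) p) :=
        add_le_add_right (cdot_mulVec_le (hA · i) (hx i)) _
    _ = cdot q (fun r => B r i) + (x i + tinv (x i)) + cdot (fun r => A r i) p := by ac_rfl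
    _ = cdot q (fun r => B r i) + cdot (fun r => A r i) p := by
        rw [add_tinv_cancel (hx i), add_zero]

theorem le_objective (hA : ∀ i j, A i j ≠ ⊥) (hp : Reg p) {α : ℝ} {k : Fin n} {s : Fin m}
    (hk : ∀ i, cdot q (fun r => B r i) + cdot (fun r => A r i) p ≤
      cdot q (fun r => B r k) + cdot (fun r => A r k) p)
    (hs : ∀ i, tinv (A i k) + p i ≤ tinv (A s k) + p s)
    (hxk : x k = α + cdot (fun r => A r k) p)
    (hxj : ∀ j, j ≠ k → x j ≤ α + (tinv (A s j) + p s)) :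
    cdot q (mulVec (tmul B (conjM A)) p) ≤ objective q B A p x := by
  have hdk : cdot (fun r => A r k) p = tinv (A s k) + p s :=
    le_antisymm (Finset.sup_le fun i _ => hs i) (le_cdot (fun r => A r k) p s)
  have hrow : mulVec A x s ≤ α + p s := Finset.sup_le fun j _ => by
    rw [← le_tinv_add_iff_add_le (hA s j), add_left_comm]
    rcases eq_or_ne j k with rfl | hj
    · rw [hxk, hdk]
    · exact hxj j hj
  have hxk_ne : x k ≠ ⊥ := by
    rw [hxk, hdk]
    exact WithBot.add_ne_bot.2
      ⟨WithBot.coe_ne_bot, WithBot.add_ne_bot.2 ⟨tinv_ne_bot (hA s k), hp s⟩⟩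
  have hrow_ne : mulVec A x s ≠ ⊥ :=
    ne_bot_of_le_ne_bot (WithBot.add_ne_bot.2 ⟨hA s k, hxk_ne⟩) (add_le_mulVec A x s k)
  calc cdot q (mulVec (tmul B (conjM A)) p)
      = cdot q (fun r => B r k) + cdot (fun r => A r k) p :=
        le_antisymm (by rw [cdot_mulVec_tmul_conjM]; exact Finset.sup_le fun i _ => hk i)
          (le_cdot_mulVec_tmul_conjM q B A p k)
    _ = cdot q (fun r => B r k) + cdot (fun r => A r k) p + (α + tinv α) + (tinv (p s) + p s) := by
        rw [add_tinv_cancel WithBot.coe_ne_bot, tinv_add_cancel (hp s), add_zero, add_zero]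
    _ = cdot q (fun r => B r k) + x k + (tinv (α + p s) + p s) := by
        rw [hxk, tinv_add]
        ac_rfl
    _ ≤ cdot q (fun r => B r k) + x k + (tinv (mulVec A x s) + p s) :=
        add_le_add_right (add_le_add_left (tinv_le_tinv hrow_ne hrow) _) _
    _ ≤ objective q B A p x := by
        rw [objective, cdot_mulVec]
        exact add_le_add (le_sup (f := fun i => cdot q (fun r => B r i) + x i) (mem_univ k))
          (le_cdot (mulVec A x) p s)

theorem tight_of_objective_eq {k : Fin n} {t : Fin m} (hA : ∀ i j, A i j ≠ ⊥) (hp : Reg p)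
    (hx : Reg x) (hck : cdot q (fun r => B r k) ≠ ⊥)
    (hk : cdot q (mulVec B x) = cdot q (fun r => B r k) + x k)
    (ht : cdot (mulVec A x) p = tinv (mulVec A x t) + p t)
    (h : objective q B A p x = cdot q (mulVec (tmul B (conjM A)) p)) :
    cdot q (mulVec (tmul B (conjM A)) p) = cdot q (fun r => B r k) + cdot (fun r => A r k) p ∧
      cdot (fun r => A r k) p = tinv (A t k) + p t ∧ mulVec A x t = A t k + x k := by
  have hval : objective q B A p x =
      cdot q (fun r => B r k) + (x k + (tinv (mulVec A x t) + p t)) := by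
    rw [objective, hk, ht, add_assoc]
  have hrow := add_le_mulVec A x t k
  have hupper : x k + (tinv (mulVec A x t) + p t) ≤ tinv (A t k) + p t :=
    calc x k + (tinv (mulVec A x t) + p t) ≤ x k + (tinv (A t k + x k) + p t) :=
          add_le_add_right (add_le_add_left
            (tinv_le_tinv (WithBot.add_ne_bot.2 ⟨hA t k, hx k⟩) hrow) _) _
      _ = tinv (A t k) + p t + (x k + tinv (x k)) := by rw [tinv_add]; ac_rfl
      _ = tinv (A t k) + p t := by rw [add_tinv_cancel (hx k), add_zero]
  have hdt := le_cdot (fun r => A r k) p t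
  have hΔ : cdot q (mulVec (tmul B (conjM A)) p) =
      cdot q (fun r => B r k) + cdot (fun r => A r k) p := by
    refine le_antisymm ?_ (le_cdot_mulVec_tmul_conjM q B A p k)
    rw [← h, hval]
    exact add_le_add_right (hupper.trans hdt) _
  have hdk : cdot (fun r => A r k) p = tinv (A t k) + p t := by
    refine le_antisymm ((WithBot.add_le_add_iff_left hck).1 ?_) hdt
    rw [← hΔ, ← h, hval]
    exact add_le_add_right hupper _
  refine ⟨hΔ, hdk, ?_⟩
  have htight : x k + (tinv (mulVec A x t) + p t) = tinv (A t k) + p t :=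
    WithBot.add_left_cancel hck (by rw [← hval, h, hΔ, hdk])
  obtain ⟨xk, hxk⟩ := WithBot.ne_bot_iff_exists.1 (hx k)
  obtain ⟨atk, hatk⟩ := WithBot.ne_bot_iff_exists.1 (hA t k)
  obtain ⟨pt, hpt⟩ := WithBot.ne_bot_iff_exists.1 (hp t)
  obtain ⟨e, he⟩ := WithBot.ne_bot_iff_exists.1
    (ne_bot_of_le_ne_bot (WithBot.add_ne_bot.2 ⟨hA t k, hx k⟩) hrow)
  rw [← hxk, ← hatk, ← hpt, ← he, tinv_coe, tinv_coe] at htight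
  rw [← hxk, ← hatk, ← he]
  norm_cast at htight ⊢
  linarith

theorem exists_of_objective_eq (hn : 0 < n) (hm : 0 < m) (hA : ∀ i j, A i j ≠ ⊥)
    (hB : ∀ j, ∃ i, B i j ≠ ⊥) (hp : Reg p) (hq : Reg q) (hx : Reg x)
    (h : objective q B A p x = cdot q (mulVec (tmul B (conjM A)) p)) :
    ∃ (α : ℝ) (k : Fin n) (s : Fin m),
      (∀ i, cdot q (fun r => B r i) + cdot (fun r => A r i) p ≤
        cdot q (fun r => B r k) + cdot (fun r => A r k) p) ∧
      (∀ i, tinv (A i k) + p i ≤ tinv (A s k) + p s) ∧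
      x k = α + cdot (fun r => A r k) p ∧
      ∀ j, j ≠ k → x j ≤ α + (tinv (A s j) + p s) := by
  obtain ⟨k, -, hk⟩ : ∃ k ∈ univ, cdot q (mulVec B x) = cdot q (fun r => B r k) + x k := by
    rw [cdot_mulVec]
    exact exists_mem_eq_sup univ (univ_nonempty_iff.2 ⟨⟨0, hn⟩⟩) _
  obtain ⟨t, -, ht⟩ : ∃ t ∈ univ, cdot (mulVec A x) p = tinv (mulVec A x t) + p t :=
    exists_mem_eq_sup univ (univ_nonempty_iff.2 ⟨⟨0, hm⟩⟩) _
  obtain ⟨r, hr⟩ := hB k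
  obtain ⟨hΔ, hdk, hrow⟩ := tight_of_objective_eq hA hp hx (cdot_ne_bot (hq r) hr) hk ht h
  have hd : cdot (fun r => A r k) p ≠ ⊥ := hdk ▸ WithBot.add_ne_bot.2 ⟨tinv_ne_bot (hA t k), hp t⟩
  obtain ⟨α, hα⟩ := WithBot.ne_bot_iff_exists.1
    (WithBot.add_ne_bot.2 ⟨hx k, tinv_ne_bot hd⟩)
  refine ⟨α, k, t, fun i => hΔ ▸ le_cdot_mulVec_tmul_conjM q B A p i,
    fun i => hdk ▸ le_cdot (fun r => A r k) p i, ?_, fun j _ => ?_⟩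
  · rw [hα, add_assoc, tinv_add_cancel hd, add_zero]
  · rw [add_left_comm, le_tinv_add_iff_add_le (hA t j)]
    calc A t j + x j ≤ mulVec A x t := add_le_mulVec A x t j
      _ = A t k + x k := hrow
      _ = α + p t := by
        rw [hα, hdk, tinv_add, tinv_tinv, add_assoc, add_assoc, tinv_add_cancel (hp t), add_zero,
          add_comm]

theorem exists_reg_objective_eq (hn : 0 < n) (hm : 0 < m) (hA : ∀ i j, A i j ≠ ⊥)
    (hp : Reg p) :
    ∃ x, Reg x ∧ objective q B A p x = cdot q (mulVec (tmul B (conjM A)) p) := by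
  obtain ⟨k, -, hk⟩ := exists_mem_eq_sup univ (univ_nonempty_iff.2 ⟨⟨0, hn⟩⟩)
    fun i => cdot q (fun r => B r i) + cdot (fun r => A r i) p
  obtain ⟨s, -, hs⟩ : ∃ s ∈ univ, cdot (fun r => A r k) p = tinv (A s k) + p s :=
    exists_mem_eq_sup univ (univ_nonempty_iff.2 ⟨⟨0, hm⟩⟩) _
  have hx : Reg fun j => tinv (A s j) + p s :=
    fun j => WithBot.add_ne_bot.2 ⟨tinv_ne_bot (hA s j), hp s⟩
  refine ⟨_, hx, le_antisymm (objective_le hA hx)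
    (le_objective (α := 0) (k := k) (s := s) hA hp ?_ ?_ ?_ ?_)⟩
  · intro i
    rw [← hk, ← cdot_mulVec_tmul_conjM]
    exact le_cdot_mulVec_tmul_conjM q B A p i
  · exact fun i => hs ▸ le_cdot (fun r => A r k) p i
  · rw [WithBot.coe_zero, zero_add, hs]
  · simp

end Objective

end MaxPlus

theorem stmt_8_general {l m n : ℕ} (hm : 0 < m) (hn : 0 < n)
    (A : Matrix (Fin m) (Fin n) (WithBot ℝ)) (hA : ∀ i j, A i j ≠ ⊥)
    (B : Matrix (Fin l) (Fin n) (WithBot ℝ)) (hB : ∀ j, ∃ i, B i j ≠ ⊥)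
    (p : Fin m → WithBot ℝ) (hp : Reg p)
    (q : Fin l → WithBot ℝ) (hq : Reg q)
    (Δ : WithBot ℝ) (hΔ : Δ = cdot q (mulVec (tmul B (conjM A)) p)) :
    IsGreatest {v | ∃ x : Fin n → WithBot ℝ, Reg x ∧
        cdot q (mulVec B x) + cdot (mulVec A x) p = v} Δ ∧
      ∀ x : Fin n → WithBot ℝ, Reg x →
        (cdot q (mulVec B x) + cdot (mulVec A x) p = Δ ↔
          ∃ (α : ℝ) (k : Fin n) (s : Fin m),
            (∀ i : Fin n, cdot q (fun r => B r i) + cdot (fun r => A r i) p ≤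
                cdot q (fun r => B r k) + cdot (fun r => A r k) p) ∧
            (∀ i : Fin m, tinv (A i k) + p i ≤ tinv (A s k) + p s) ∧
            x k = (α : WithBot ℝ) + cdot (fun r => A r k) p ∧
            ∀ j, j ≠ k → x j ≤ (α : WithBot ℝ) + (tinv (A s j) + p s)) := by
  subst hΔ
  refine ⟨⟨exists_reg_objective_eq hn hm hA hp, ?_⟩, fun x hx => ⟨?_, ?_⟩⟩
  · rintro v ⟨x, hx, rfl⟩
    exact objective_le hA hx
  · exact exists_of_objective_eq hn hm hA hB hp hq hx
  · rintro ⟨α, k, s, hk, hs, hxk, hxj⟩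
    exact le_antisymm (objective_le hA hx) (le_objective hA hp hk hs hxk hxj)

/-- maximization of `q⁻ B x ⊗ (A x)⁻ p`. -/
theorem stmt_8 {l m n : ℕ} (hl : 0 < l) (hm : 0 < m) (hn : 0 < n)
    (A : Matrix (Fin m) (Fin n) (WithBot ℝ)) (hA : ∀ i j, A i j ≠ ⊥)
    (B : Matrix (Fin l) (Fin n) (WithBot ℝ)) (hB : ∀ j, ∃ i, B i j ≠ ⊥)
    (p : Fin m → WithBot ℝ) (hp : Reg p)
    (q : Fin l → WithBot ℝ) (hq : Reg q)
    (Δ : WithBot ℝ) (hΔ : Δ = cdot q (mulVec (tmul B (conjM A)) p)) :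
    IsGreatest {v | ∃ x : Fin n → WithBot ℝ, Reg x ∧
        cdot q (mulVec B x) + cdot (mulVec A x) p = v} Δ ∧
      ∀ x : Fin n → WithBot ℝ, Reg x →
        (cdot q (mulVec B x) + cdot (mulVec A x) p = Δ ↔
          ∃ (α : ℝ) (k : Fin n) (s : Fin m),
            (∀ i : Fin n, cdot q (fun r => B r i) + cdot (fun r => A r i) p ≤
                cdot q (fun r => B r k) + cdot (fun r => A r k) p) ∧
            (∀ i : Fin m, tinv (A i k) + p i ≤ tinv (A s k) + p s) ∧
            x k = (α : WithBot ℝ) + cdot (fun r => A r k) p ∧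
            ∀ j, j ≠ k → x j ≤ (α : WithBot ℝ) + (tinv (A s j) + p s)) :=
  stmt_8_general hm hn A hA B hB p hp q hq Δ hΔ
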